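/- Fix x, G ∈ ℝ^n and γ > 0, let x⁺ := x⁺(x, G, γ) be the unique minimizer of u ↦ ψ_γ(x, G, u), and set g̃^r := P_γ(x, G) = (x − x⁺)/γ, g̃ := P_γ(x, ∇f(x)) and δ := G − ∇f(x). Then Φ_h(x⁺) ≤ Φ_h(x) − (γ − L·γ²/2)·‖g̃^r‖² + γ·⟨δ, g̃⟩ + γ·‖δ‖². -/

import Mathlib

/-!
The model `u ↦ ⟪G, u - x⟫ + h (c x + J x (u - x)) + ‖u - x‖² / (2γ)` is `γ⁻¹`-strongly convex, so
its minimizer `x⁺` beats every `u` by `‖u - x⁺‖² / (2γ)`; at `u = x` this is a decrease of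
`‖x⁺ - x‖² / γ` below `h (c x)`. The Lipschitz bounds on `∇f` and `J` put `f + h ∘ c` below its
linearization at `x` plus `L/2 ‖x⁺ - x‖²`. Trading `G` for `∇f x` in the linear term costs
`⟪δ, x - x⁺⟫ = ⟪δ, x - x̃⟫ + ⟪δ, x̃ - x⁺⟫`, and the last term is at most `γ ‖δ‖²` since the
minimizer is `γ`-Lipschitz in the linear coefficient.
-/

open scoped RealInnerProductSpace
open Set Filter Topology InnerProductSpace

theorem norm_sub_le_half_of_norm_deriv_le_mul {F : Type*} [NormedAddCommGroup F] [NormedSpace ℝ F]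
    {φ φ' : ℝ → F} {C : ℝ} (hφ : ∀ t ∈ Icc (0 : ℝ) 1, HasDerivAt φ (φ' t) t)
    (hφ' : ∀ t ∈ Icc (0 : ℝ) 1, ‖φ' t‖ ≤ C * t) :
    ‖φ 1 - φ 0‖ ≤ C / 2 := by
  have hB : ∀ t, HasDerivAt (fun t : ℝ => C / 2 * t ^ 2) (C * t) t := fun t =>
    ((hasDerivAt_pow 2 t).const_mul (C / 2)).congr_deriv (by push_cast; ring)
  have := image_norm_le_of_norm_deriv_right_le_deriv_boundary (f := fun t => φ t - φ 0)
    (fun t ht => ((hφ t ht).continuousAt.sub continuousAt_const).continuousWithinAt)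
    (fun t ht => ((hφ t (Ico_subset_Icc_self ht)).sub_const (φ 0)).hasDerivWithinAt)
    (by simp) hB (fun t ht => hφ' t (Ico_subset_Icc_self ht)) (right_mem_Icc.2 zero_le_one)
  simpa using this

theorem norm_image_sub_sub_fderiv_le_of_lipschitz {E F : Type*} [NormedAddCommGroup E]
    [NormedSpace ℝ E] [NormedAddCommGroup F] [NormedSpace ℝ F] {c : E → F} {J : E → E →L[ℝ] F}
    {K : ℝ} (hc : ∀ z, HasFDerivAt c (J z) z) (hJ : ∀ a b, ‖J a - J b‖ ≤ K * ‖a - b‖) (x y : E) :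
    ‖c y - c x - J x (y - x)‖ ≤ K / 2 * ‖y - x‖ ^ 2 := by
  set s := y - x
  have hline (t : ℝ) : HasDerivAt (fun t : ℝ => x + t • s) s t := by
    simpa using ((hasDerivAt_id t).smul_const s).const_add x
  have hderiv : ∀ t ∈ Icc (0 : ℝ) 1, HasDerivAt (fun t : ℝ => c (x + t • s) - t • J x s)
      (J (x + t • s) s - J x s) t := fun t _ => by
    exact (((hc _).comp_hasDerivAt t (hline t)).sub
      ((hasDerivAt_id' t).smul_const (J x s))).congr_deriv (by rw [one_smul])
  have hbound : ∀ t ∈ Icc (0 : ℝ) 1, ‖J (x + t • s) s - J x s‖ ≤ K * ‖s‖ ^ 2 * t :=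
    fun t ht => calc
      ‖J (x + t • s) s - J x s‖ ≤ ‖J (x + t • s) - J x‖ * ‖s‖ := by
        rw [← sub_apply]; exact ContinuousLinearMap.le_opNorm _ _
      _ ≤ K * ‖(x + t • s) - x‖ * ‖s‖ := by gcongr; exact hJ _ _
      _ = K * ‖s‖ ^ 2 * t := by
        rw [add_sub_cancel_left, norm_smul, Real.norm_of_nonneg ht.1]; ring
  have := norm_sub_le_half_of_norm_deriv_le_mul hderiv hbound
  rw [one_smul, one_smul, zero_smul, add_zero, zero_smul, sub_zero, add_sub_cancel] at this
  rw [sub_right_comm]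
  linarith

theorem le_add_inner_add_of_lipschitz_gradient {E : Type*} [NormedAddCommGroup E]
    [InnerProductSpace ℝ E] [CompleteSpace E] {f : E → ℝ} {gradf : E → E} {K : ℝ}
    (hf : ∀ z, HasGradientAt f (gradf z) z) (hgrad : ∀ a b, ‖gradf a - gradf b‖ ≤ K * ‖a - b‖)
    (x y : E) :
    f y ≤ f x + ⟪gradf x, y - x⟫ + K / 2 * ‖y - x‖ ^ 2 := by
  have hdual : ∀ a b, ‖toDual ℝ E (gradf a) - toDual ℝ E (gradf b)‖ ≤ K * ‖a - b‖ := fun a b => by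
    rw [← map_sub, LinearIsometryEquiv.norm_map]; exact hgrad a b
  have := norm_image_sub_sub_fderiv_le_of_lipschitz (fun z => (hf z).hasFDerivAt) hdual x y
  rw [toDual_apply_apply, Real.norm_eq_abs] at this
  linarith [le_abs_self (f y - f x - ⟪gradf x, y - x⟫)]

theorem add_comp_le_of_lipschitz {E F : Type*} [NormedAddCommGroup E] [InnerProductSpace ℝ E]
    [CompleteSpace E] [NormedAddCommGroup F] [NormedSpace ℝ F] {f : E → ℝ} {gradf : E → E}
    {c : E → F} {J : E → E →L[ℝ] F} {h : F → ℝ} {L_g L_J L_h : ℝ} (hLh : 0 ≤ L_h)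
    (hf : ∀ z, HasGradientAt f (gradf z) z) (hgrad : ∀ a b, ‖gradf a - gradf b‖ ≤ L_g * ‖a - b‖)
    (hc : ∀ z, HasFDerivAt c (J z) z) (hJ : ∀ a b, ‖J a - J b‖ ≤ L_J * ‖a - b‖)
    (hh : ∀ a b, |h a - h b| ≤ L_h * ‖a - b‖) (x y : E) :
    f y + h (c y) ≤
      f x + ⟪gradf x, y - x⟫ + h (c x + J x (y - x)) + (L_g + L_h * L_J) / 2 * ‖y - x‖ ^ 2 := by
  have hf_le := le_add_inner_add_of_lipschitz_gradient hf hgrad x y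
  have hc_le := norm_image_sub_sub_fderiv_le_of_lipschitz hc hJ x y
  have hh_le : h (c y) - h (c x + J x (y - x)) ≤ L_h * (L_J / 2 * ‖y - x‖ ^ 2) := calc
    _ ≤ |h (c y) - h (c x + J x (y - x))| := le_abs_self _
    _ ≤ L_h * ‖c y - c x - J x (y - x)‖ := by rw [sub_sub]; exact hh _ _
    _ ≤ L_h * (L_J / 2 * ‖y - x‖ ^ 2) := by gcongr
  linarith

theorem StrongConvexOn.add_sq_norm_sub_le_of_isMinOn {E : Type*} [NormedAddCommGroup E]
    [NormedSpace ℝ E] {s : Set E} {m : ℝ} {f : E → ℝ} {u₀ u : E}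
    (hf : StrongConvexOn s m f) (hmin : IsMinOn f s u₀) (hu₀ : u₀ ∈ s) (hu : u ∈ s) :
    f u₀ + m / 2 * ‖u - u₀‖ ^ 2 ≤ f u := by
  have hsegment : ∀ t ∈ Ioo (0 : ℝ) 1, (1 - t) * (m / 2 * ‖u - u₀‖ ^ 2) ≤ f u - f u₀ :=
    fun t ⟨ht₀, ht₁⟩ => by
      have hconv := hf.2 hu₀ hu (sub_nonneg.2 ht₁.le) ht₀.le (sub_add_cancel 1 t)
      have hle := isMinOn_iff.1 hmin _
        (hf.1 hu₀ hu (sub_nonneg.2 ht₁.le) ht₀.le (sub_add_cancel 1 t))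
      rw [norm_sub_rev, smul_eq_mul, smul_eq_mul] at hconv
      refine le_of_mul_le_mul_left ?_ ht₀
      linarith
  have hlim : Tendsto (fun t : ℝ => (1 - t) * (m / 2 * ‖u - u₀‖ ^ 2)) (𝓝[>] 0)
      (𝓝 (m / 2 * ‖u - u₀‖ ^ 2)) := by
    have : Continuous fun t : ℝ => (1 - t) * (m / 2 * ‖u - u₀‖ ^ 2) := by fun_prop
    simpa using (this.tendsto 0).mono_left nhdsWithin_le_nhds
  have := le_of_tendsto hlim (by filter_upwards [Ioo_mem_nhdsGT one_pos] using hsegment)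
  linarith

section Prox

variable {E : Type*} [NormedAddCommGroup E] [InnerProductSpace ℝ E]
  {s : Set E} {φ : E → ℝ} {x g : E} {γ : ℝ}

/-- The paper's `ψ_γ(x, g, ·)`, with the convex term `h (c x + J x (u - x))` abstracted to `φ`. -/
noncomputable def proxObjective (φ : E → ℝ) (x g : E) (γ : ℝ) (u : E) : ℝ :=
  ⟪g, u - x⟫ + φ u + ‖u - x‖ ^ 2 / (2 * γ)

theorem ConvexOn.strongConvexOn_proxObjective (hφ : ConvexOn ℝ s φ) :
    StrongConvexOn s γ⁻¹ (proxObjective φ x g γ) := by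
  rw [strongConvexOn_iff_convex]
  have hlin : ConvexOn ℝ s fun u => ⟪g - γ⁻¹ • x, u⟫ :=
    (innerSL ℝ (g - γ⁻¹ • x)).toLinearMap.convexOn hφ.1
  refine ((hφ.add hlin).add_const (‖x‖ ^ 2 / (2 * γ) - ⟪g, x⟫)).congr fun u _ => ?_
  simp only [proxObjective, Pi.add_apply, inner_sub_left, inner_sub_right, real_inner_smul_left,
    norm_sub_sq_real]
  rw [real_inner_comm x u]
  ring

theorem ConvexOn.proxObjective_add_le_of_isMin (hφ : ConvexOn ℝ univ φ) {u₀ : E}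
    (hmin : ∀ u, proxObjective φ x g γ u₀ ≤ proxObjective φ x g γ u) (u : E) :
    proxObjective φ x g γ u₀ + ‖u - u₀‖ ^ 2 / (2 * γ) ≤ proxObjective φ x g γ u := by
  have := hφ.strongConvexOn_proxObjective.add_sq_norm_sub_le_of_isMinOn
    (isMinOn_univ_iff.2 hmin) (mem_univ u₀) (mem_univ u)
  rwa [inv_div_left, inv_mul_eq_div] at this

theorem ConvexOn.norm_sub_le_of_isMin_proxObjective (hφ : ConvexOn ℝ univ φ) (hγ : 0 < γ)
    {g₁ g₂ u₁ u₂ : E} (h₁ : ∀ u, proxObjective φ x g₁ γ u₁ ≤ proxObjective φ x g₁ γ u)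
    (h₂ : ∀ u, proxObjective φ x g₂ γ u₂ ≤ proxObjective φ x g₂ γ u) :
    ‖u₁ - u₂‖ ≤ γ * ‖g₁ - g₂‖ := by
  have hsum : ‖u₁ - u₂‖ ^ 2 / γ ≤ ⟪g₁ - g₂, u₂ - u₁⟫ := by
    have e₁ := hφ.proxObjective_add_le_of_isMin h₁ u₂
    have e₂ := hφ.proxObjective_add_le_of_isMin h₂ u₁
    simp only [proxObjective] at e₁ e₂
    rw [norm_sub_rev u₂] at e₁
    have hinner : ⟪g₁ - g₂, u₂ - u₁⟫ =
        ⟪g₁, u₂ - x⟫ - ⟪g₁, u₁ - x⟫ + (⟪g₂, u₁ - x⟫ - ⟪g₂, u₂ - x⟫) := by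
      simp only [inner_sub_left, inner_sub_right]; ring
    have hhalf : ‖u₁ - u₂‖ ^ 2 / γ = 2 * (‖u₁ - u₂‖ ^ 2 / (2 * γ)) := by field_simp
    linarith
  have hcs : ⟪g₁ - g₂, u₂ - u₁⟫ ≤ ‖g₁ - g₂‖ * ‖u₁ - u₂‖ := by
    rw [norm_sub_rev u₁]; exact real_inner_le_norm _ _
  rw [div_le_iff₀ hγ] at hsum
  rcases (norm_nonneg (u₁ - u₂)).eq_or_lt with hzero | hpos
  · rw [← hzero]; positivity
  · nlinarith

end Prox

theorem stmt_6_general {n q : ℕ}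
    (f : EuclideanSpace ℝ (Fin n) → ℝ)
    (gradf : EuclideanSpace ℝ (Fin n) → EuclideanSpace ℝ (Fin n))
    (c : EuclideanSpace ℝ (Fin n) → EuclideanSpace ℝ (Fin q))
    (J : EuclideanSpace ℝ (Fin n) → EuclideanSpace ℝ (Fin n) →L[ℝ] EuclideanSpace ℝ (Fin q))
    (h : EuclideanSpace ℝ (Fin q) → ℝ)
    (L_g L_J L_h L : ℝ) (hLh : 0 < L_h)
    (hL : L = L_g + L_h * L_J)
    (hf : ∀ z, HasGradientAt f (gradf z) z)
    (hgradLip : ∀ a b, ‖gradf a - gradf b‖ ≤ L_g * ‖a - b‖)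
    (hc : ∀ z, HasFDerivAt c (J z) z)
    (hJLip : ∀ a b, ‖J a - J b‖ ≤ L_J * ‖a - b‖)
    (hconv : ConvexOn ℝ Set.univ h)
    (hhLip : ∀ a b, |h a - h b| ≤ L_h * ‖a - b‖)
    (x G : EuclideanSpace ℝ (Fin n)) (γ : ℝ) (hγ : 0 < γ)
    (xplus xtilde : EuclideanSpace ℝ (Fin n))
    -- x⁺ is the minimizer of ψ_γ(x, G, ·):
    (hxplus : ∀ u, ⟪G, xplus - x⟫ + h (c x + J x (xplus - x)) + ‖xplus - x‖ ^ 2 / (2 * γ) ≤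
      ⟪G, u - x⟫ + h (c x + J x (u - x)) + ‖u - x‖ ^ 2 / (2 * γ))
    -- x̃ is the minimizer of ψ_γ(x, ∇f(x), ·), so that g̃ = (x − x̃)/γ:
    (hxtilde : ∀ u, ⟪gradf x, xtilde - x⟫ + h (c x + J x (xtilde - x)) +
        ‖xtilde - x‖ ^ 2 / (2 * γ) ≤
      ⟪gradf x, u - x⟫ + h (c x + J x (u - x)) + ‖u - x‖ ^ 2 / (2 * γ)) :
    f xplus + h (c xplus) ≤
      f x + h (c x) - (γ - L * γ ^ 2 / 2) * ‖γ⁻¹ • (x - xplus)‖ ^ 2 +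
        γ * ⟪G - gradf x, γ⁻¹ • (x - xtilde)⟫ + γ * ‖G - gradf x‖ ^ 2 := by
  set φ := fun u => h (c x + J x (u - x))
  have hφ : ConvexOn ℝ univ φ :=
    (((hconv.translate_right (c x)).comp_linearMap (J x : _ →ₗ[ℝ] _)).translate_right (-x)).congr
      fun u _ => by simp [φ, sub_eq_neg_add]
  have hstep := hφ.proxObjective_add_le_of_isMin (x := x) (g := G) hxplus x
  have hprox := hφ.norm_sub_le_of_isMin_proxObjective (x := x) (g₁ := G) hγ hxplus hxtilde
  have hmodel := add_comp_le_of_lipschitz hLh.le hf hgradLip hc hJLip hhLip x xplus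
  have hinner : ⟪G - gradf x, xtilde - xplus⟫ ≤ γ * ‖G - gradf x‖ ^ 2 := calc
    _ ≤ ‖G - gradf x‖ * ‖xtilde - xplus‖ := real_inner_le_norm _ _
    _ ≤ ‖G - gradf x‖ * (γ * ‖G - gradf x‖) := by rw [norm_sub_rev xtilde]; gcongr
    _ = γ * ‖G - gradf x‖ ^ 2 := by ring
  simp only [proxObjective, φ, norm_sub_rev x xplus, sub_self, inner_zero_right, map_zero, add_zero,
    norm_zero, ne_eq, OfNat.ofNat_ne_zero, not_false_eq_true, zero_pow, zero_div] at hstep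
  have hsq : ‖γ⁻¹ • (x - xplus)‖ ^ 2 = ‖xplus - x‖ ^ 2 / γ ^ 2 := by
    rw [norm_smul, norm_inv, Real.norm_of_nonneg hγ.le, norm_sub_rev]; field_simp
  have hlin : γ * ⟪G - gradf x, γ⁻¹ • (x - xtilde)⟫ = ⟪G - gradf x, x - xtilde⟫ := by
    rw [real_inner_smul_right]; field_simp
  have hsplit : ⟪gradf x, xplus - x⟫ - ⟪G, xplus - x⟫ =
      ⟪G - gradf x, x - xtilde⟫ + ⟪G - gradf x, xtilde - xplus⟫ := by
    simp only [inner_sub_left, inner_sub_right]; ring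
  have hcoef : (γ - L * γ ^ 2 / 2) * (‖xplus - x‖ ^ 2 / γ ^ 2) =
      2 * (‖xplus - x‖ ^ 2 / (2 * γ)) - L / 2 * ‖xplus - x‖ ^ 2 := by
    field_simp
  rw [hsq, hlin, hcoef, hL]
  linarith

/-- descent inequality for one step of the stochastic composite method:
Φ_h(x⁺) ≤ Φ_h(x) − (γ − Lγ²/2)‖g̃ʳ‖² + γ⟨δ, g̃⟩ + γ‖δ‖², where
x⁺ minimizes ψ_γ(x, G, ·), g̃ʳ = P_γ(x, G), g̃ = P_γ(x, ∇f(x)), δ = G − ∇f(x),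
Φ_h = f + h∘c and L = L_g + L_h·L_J. -/
theorem stmt_6 {n q : ℕ}
    (f : EuclideanSpace ℝ (Fin n) → ℝ)
    (gradf : EuclideanSpace ℝ (Fin n) → EuclideanSpace ℝ (Fin n))
    (c : EuclideanSpace ℝ (Fin n) → EuclideanSpace ℝ (Fin q))
    (J : EuclideanSpace ℝ (Fin n) → EuclideanSpace ℝ (Fin n) →L[ℝ] EuclideanSpace ℝ (Fin q))
    (h : EuclideanSpace ℝ (Fin q) → ℝ)
    (L_g L_J L_h L : ℝ) (hLg : 0 < L_g) (hLJ : 0 < L_J) (hLh : 0 < L_h)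
    (hL : L = L_g + L_h * L_J)
    (hf : ∀ z, HasGradientAt f (gradf z) z)
    (hgradLip : ∀ a b, ‖gradf a - gradf b‖ ≤ L_g * ‖a - b‖)
    (hc : ∀ z, HasFDerivAt c (J z) z)
    (hJLip : ∀ a b, ‖J a - J b‖ ≤ L_J * ‖a - b‖)
    (hconv : ConvexOn ℝ Set.univ h)
    (hhLip : ∀ a b, |h a - h b| ≤ L_h * ‖a - b‖)
    (x G : EuclideanSpace ℝ (Fin n)) (γ : ℝ) (hγ : 0 < γ)
    (xplus xtilde : EuclideanSpace ℝ (Fin n))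
    -- x⁺ is the minimizer of ψ_γ(x, G, ·):
    (hxplus : ∀ u, ⟪G, xplus - x⟫ + h (c x + J x (xplus - x)) + ‖xplus - x‖ ^ 2 / (2 * γ) ≤
      ⟪G, u - x⟫ + h (c x + J x (u - x)) + ‖u - x‖ ^ 2 / (2 * γ))
    -- x̃ is the minimizer of ψ_γ(x, ∇f(x), ·), so that g̃ = (x − x̃)/γ:
    (hxtilde : ∀ u, ⟪gradf x, xtilde - x⟫ + h (c x + J x (xtilde - x)) +
        ‖xtilde - x‖ ^ 2 / (2 * γ) ≤
      ⟪gradf x, u - x⟫ + h (c x + J x (u - x)) + ‖u - x‖ ^ 2 / (2 * γ)) :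
    f xplus + h (c xplus) ≤
      f x + h (c x) - (γ - L * γ ^ 2 / 2) * ‖γ⁻¹ • (x - xplus)‖ ^ 2 +
        γ * ⟪G - gradf x, γ⁻¹ • (x - xtilde)⟫ + γ * ‖G - gradf x‖ ^ 2 :=
  stmt_6_general f gradf c J h L_g L_J L_h L hLh hL hf hgradLip hc hJLip hconv hhLip x G γ hγ xplus
    xtilde hxplus hxtilde
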